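/- The Laplace mechanism satisfies ε-differential privacy: if a query q : D → ℝ has sensitivity Δ (i.e., |q(D₁) - q(D₂)| ≤ Δ for all neighboring databases D₁, D₂), then for the mechanism M(D) = q(D) + Lap(Δ/ε), the probability density at any output value y satisfies p_{M(D₁)}(y) ≤ e^ε · p_{M(D₂)}(y) for all neighboring D₁, D₂. -/
import Mathlib

theorem laplace_mechanism_density_dp (Δ ε : ℝ) (hΔ : 0 < Δ) (hε : 0 < ε) :
    ∀ y a b : ℝ, |a - b| ≤ Δ →
      (1 / (2 * (Δ / ε))) * Real.exp (-|y - a| / (Δ / ε)) ≤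
        Real.exp ε * ((1 / (2 * (Δ / ε))) * Real.exp (-|y - b| / (Δ / ε))) := by
  intro y a b hab
  have hL : 0 < Δ / ε := div_pos hΔ hε
  have hc : 0 ≤ 1 / (2 * (Δ / ε)) := by positivity
  rw [mul_left_comm]
  apply mul_le_mul_of_nonneg_left _ hc
  rw [← Real.exp_add]
  apply Real.exp_le_exp.mpr
  have h1 : |y - b| - |y - a| ≤ Δ := by
    have h := abs_sub_abs_le_abs_sub (y - b) (y - a)
    have h2 : (y - b) - (y - a) = a - b := by ring
    rw [h2] at h
    linarith
  have key : (|y - b| - |y - a|) / (Δ / ε) ≤ ε := by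
    rw [div_le_iff₀ hL]
    have : ε * (Δ / ε) = Δ := by field_simp
    linarith
  rw [sub_div] at key
  rw [neg_div, neg_div]
  linarith
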